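/- arXiv:1812.09547 — 7 statements merged into one kernel-verified Lean document; each statement's English description precedes it below -/
import Mathlib

section
/- Let ℓ and ℓ' be distinct lines in 𝔻² defined respectively by y = ax + b and y = a'x + b', where a = a₁ + εa₂, b = b₁ + εb₂, a' = a'₁ + εa'₂, b' = b'₁ + εb'₂. Then ℓ ∩ ℓ' contains more than one point if and only if a₁ = a'₁, b₁ = b'₁, and a₂ ≠ a'₂. Moreover, when these conditions are satisfied, ℓ ∩ ℓ' is infinite, and there exist r₁, r₂ ∈ ℝ such that every point (x,y) ∈ ℓ ∩ ℓ' satisfies Re(x) = r₁ and Re(y) = r₂. -/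
/-- The real part of a dual number `a = a₁ + ε a₂`, i.e. `a₁`. -/
def DRe (x : DualNumber ℝ) : ℝ := TrivSqZeroExt.fst x

/-- The imaginary part of a dual number `a = a₁ + ε a₂`, i.e. `a₂`. -/
def DIm (x : DualNumber ℝ) : ℝ := TrivSqZeroExt.snd x

/-- The line in the dual plane `𝔻²` defined by the equation `y = a x + b`. -/
def dualLine (a b : DualNumber ℝ) : Set (DualNumber ℝ × DualNumber ℝ) :=
  {p | p.2 = a * p.1 + b}

/-!
A point lies on both lines iff `y = a x + b` and `(a - a') x = b' - b`, so the intersection is the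
graph of `x ↦ a x + b` over the solutions of `c x = d` with `c = a - a'`, `d = b' - b`.
If `Re c ≠ 0` then `c` is a unit and there is at most one solution. If `Re c = 0`, then `c x = d` says
`Re d = 0` and `Im c · Re x = Im d`: for `Im c ≠ 0` the solutions are exactly the `x` with
`Re x = Im d / Im c` and `Im x` arbitrary, while `Im c = 0` means `c = 0`, which for distinct lines
leaves no solution at all.
-/

namespace DualNumber

open TrivSqZeroExt

variable {K : Type*} [Field K]

theorem mul_eq_iff_of_fst_eq_zero {c x d : DualNumber K} (hc : c.fst = 0) :
    c * x = d ↔ d.fst = 0 ∧ c.snd * x.fst = d.snd := by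
  simp [TrivSqZeroExt.ext_iff, hc, smul_eq_mul, eq_comm]

theorem setOf_mul_eq_eq_setOf_fst_eq {c d : DualNumber K} (hc : c.fst = 0) (hd : d.fst = 0)
    (hc' : c.snd ≠ 0) : {x | c * x = d} = {x | x.fst = d.snd / c.snd} := by
  ext x
  simp only [Set.mem_ofPred_eq, mul_eq_iff_of_fst_eq_zero hc, hd, true_and, eq_div_iff hc',
    mul_comm]

theorem infinite_setOf_fst_eq [Infinite K] (r : K) : {x : DualNumber K | x.fst = r}.Infinite :=
  Set.infinite_of_injective_forall_mem (f := fun t : K => inl r + inr t)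
    (fun s t h => by simpa using congrArg snd h) (fun t => by simp)

theorem nontrivial_setOf_mul_eq_iff {c d : DualNumber K} (hcd : c = 0 → d ≠ 0) :
    {x | c * x = d}.Nontrivial ↔ c.fst = 0 ∧ d.fst = 0 ∧ c.snd ≠ 0 := by
  constructor
  · intro h
    have hc : c.fst = 0 := by
      by_contra hc
      have hunit : IsUnit c := isUnit_iff_isUnit_fst.2 (Ne.isUnit hc)
      exact h.not_subsingleton fun x hx y hy => hunit.mul_left_cancel (hx.trans hy.symm)
    obtain ⟨x, hx⟩ := h.nonempty
    obtain ⟨hd, -⟩ := (mul_eq_iff_of_fst_eq_zero hc).1 hx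
    refine ⟨hc, hd, fun hc' => ?_⟩
    have hc0 : c = 0 := TrivSqZeroExt.ext hc hc'
    exact hcd hc0 (by simpa [hc0] using hx.symm)
  · rintro ⟨hc, hd, hc'⟩
    rw [setOf_mul_eq_eq_setOf_fst_eq hc hd hc']
    exact ⟨inl (d.snd / c.snd), fst_inl _ _, inl (d.snd / c.snd) + inr 1, by simp,
      fun h => by simpa using congrArg snd h⟩

end DualNumber

theorem dualLine_inter_dualLine_eq_image (a b a' b' : DualNumber ℝ) :
    dualLine a b ∩ dualLine a' b' = (fun x => (x, a * x + b)) '' {x | (a - a') * x = b' - b} := by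
  ext ⟨x, y⟩
  simp only [dualLine, Set.mem_inter_iff, Set.mem_ofPred_eq, Set.mem_image, Prod.mk.injEq]
  constructor
  · rintro ⟨hy, hy'⟩
    exact ⟨x, by linear_combination hy' - hy, rfl, hy.symm⟩
  · rintro ⟨x, hx, rfl, rfl⟩
    exact ⟨rfl, by linear_combination hx⟩

/-- **Lemma 2.1(a).** Let `ℓ, ℓ'` be distinct lines in `𝔻²` defined by `y = ax + b` and
`y = a'x + b'`. Then `ℓ ∩ ℓ'` contains more than one point iff `a₁ = a'₁`, `b₁ = b'₁` and
`a₂ ≠ a'₂`; and in that case `ℓ ∩ ℓ'` is infinite and there are `r₁, r₂ ∈ ℝ` such that every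
`(x, y) ∈ ℓ ∩ ℓ'` has `Re(x) = r₁` and `Re(y) = r₂`. -/
theorem dual_line_intersection (a b a' b' : DualNumber ℝ)
    (hne : dualLine a b ≠ dualLine a' b') :
    ((dualLine a b ∩ dualLine a' b').Nontrivial ↔
      DRe a = DRe a' ∧ DRe b = DRe b' ∧ DIm a ≠ DIm a') ∧
    (DRe a = DRe a' ∧ DRe b = DRe b' ∧ DIm a ≠ DIm a' →
      (dualLine a b ∩ dualLine a' b').Infinite ∧
      ∃ r₁ r₂ : ℝ, ∀ p ∈ dualLine a b ∩ dualLine a' b',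
        DRe p.1 = r₁ ∧ DRe p.2 = r₂) := by
  have hcd : a - a' = 0 → b' - b ≠ 0 := fun ha hb =>
    hne (by rw [sub_eq_zero.1 ha, sub_eq_zero.1 hb])
  have hcond : (DRe a = DRe a' ∧ DRe b = DRe b' ∧ DIm a ≠ DIm a') ↔
      (a - a').fst = 0 ∧ (b' - b).fst = 0 ∧ (a - a').snd ≠ 0 := by
    simp only [DRe, DIm, TrivSqZeroExt.fst_sub, TrivSqZeroExt.snd_sub, sub_eq_zero, sub_ne_zero,
      eq_comm (a := b.fst)]
  have hgraph : Set.InjOn (fun x => (x, a * x + b)) {x | (a - a') * x = b' - b} :=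
    fun x _ y _ h => congrArg Prod.fst h
  rw [dualLine_inter_dualLine_eq_image, hgraph.image_nontrivial_iff,
    Set.infinite_image_iff hgraph, hcond, DualNumber.nontrivial_setOf_mul_eq_iff hcd]
  refine ⟨Iff.rfl, fun ⟨hc, hd, hc'⟩ => ?_⟩
  rw [DualNumber.setOf_mul_eq_eq_setOf_fst_eq hc hd hc']
  set r := (b' - b).snd / (a - a').snd
  refine ⟨DualNumber.infinite_setOf_fst_eq r, r, a.fst * r + b.fst, ?_⟩
  rintro _ ⟨x, hx, rfl⟩
  exact ⟨hx, by simp [DRe, hx.out]⟩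
end

section
/- Let ℒ be a set of at least two lines in 𝔻², each of the form y = ax + b, whose common intersection ⋂ℒ is infinite. Then all the lines of ℒ have the same value of a₁ and the same value of b₁, and there exist r₁, r₂ ∈ ℝ such that every point (x,y) in the common intersection satisfies Re(x) = r₁ and Re(y) = r₂. Moreover, either all the lines of ℒ have the same value of b₂, or there exists m ∈ ℝ such that every line of ℒ satisfies b₂ = r₁(m − a₂). -/
/-- **Lemma 2.1(b).** Let `ℒ` be a set of at least two lines of the form `y = ax + b`
(recorded by their coefficient pairs `(a, b)`) whose common intersection is infinite.
Then all lines of `ℒ` share the same `a₁` and the same `b₁`, there exist `r₁, r₂ ∈ ℝ` such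
that every point `(x, y)` of the common intersection satisfies `Re(x) = r₁` and `Re(y) = r₂`,
and moreover either all lines of `ℒ` have the same `b₂`, or there is `m ∈ ℝ` such that every
line of `ℒ` satisfies `b₂ = r₁ (m - a₂)`. -/
theorem dual_line_family_structure (L : Set (DualNumber ℝ × DualNumber ℝ))
    (htwo : ∃ l₁ ∈ L, ∃ l₂ ∈ L, l₁ ≠ l₂)
    (hinf : (⋂ l ∈ L, dualLine l.1 l.2).Infinite) :
    (∃ a₁ b₁ : ℝ, ∀ l ∈ L, DRe l.1 = a₁ ∧ DRe l.2 = b₁) ∧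
    ∃ r₁ r₂ : ℝ,
      (∀ p ∈ ⋂ l ∈ L, dualLine l.1 l.2, DRe p.1 = r₁ ∧ DRe p.2 = r₂) ∧
      ((∃ b₂ : ℝ, ∀ l ∈ L, DIm l.2 = b₂) ∨
        ∃ m : ℝ, ∀ l ∈ L, DIm l.2 = r₁ * (m - DIm l.1)) := by
  classical
  obtain ⟨l₁, hl₁, l₂, hl₂, hne⟩ := htwo
  set S := ⋂ l ∈ L, dualLine l.1 l.2 with hSdef
  obtain ⟨p₀, hp₀⟩ := hinf.nonempty
  have hmem : ∀ p ∈ S, ∀ l ∈ L, p.2 = l.1 * p.1 + l.2 := by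
    intro p hp l hl
    exact Set.mem_iInter₂.mp hp l hl
  have key1 : ∀ p ∈ S, ∀ l ∈ L,
      (p.2).fst = (l.1).fst * (p.1).fst + (l.2).fst := by
    intro p hp l hl
    have := congrArg TrivSqZeroExt.fst (hmem p hp l hl)
    simpa using this
  have key2 : ∀ p ∈ S, ∀ l ∈ L,
      (p.2).snd = (l.1).fst * (p.1).snd + (l.1).snd * (p.1).fst + (l.2).snd := by
    intro p hp l hl
    have := congrArg TrivSqZeroExt.snd (hmem p hp l hl)
    simp [TrivSqZeroExt.snd_mul, mul_comm] at this
    linarith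
  -- all a₁ equal
  have ha : ∀ l ∈ L, ∀ l' ∈ L, (l.1).fst = (l'.1).fst := by
    intro l hl l' hl'
    by_contra hne'
    apply hinf
    apply Set.Subsingleton.finite
    intro p hp q hq
    have e1p := key1 p hp l hl
    have e1p' := key1 p hp l' hl'
    have e1q := key1 q hq l hl
    have e1q' := key1 q hq l' hl'
    have hc : (l.1).fst - (l'.1).fst ≠ 0 := sub_ne_zero.mpr hne'
    have hx1 : (p.1).fst = (q.1).fst := by
      have h : ((l.1).fst - (l'.1).fst) * (p.1).fst
          = ((l.1).fst - (l'.1).fst) * (q.1).fst := by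
        linear_combination e1p' - e1p + e1q - e1q'
      exact mul_left_cancel₀ hc h
    have e2p := key2 p hp l hl
    have e2p' := key2 p hp l' hl'
    have e2q := key2 q hq l hl
    have e2q' := key2 q hq l' hl'
    have hx2 : (p.1).snd = (q.1).snd := by
      have h : ((l.1).fst - (l'.1).fst) * (p.1).snd
          = ((l.1).fst - (l'.1).fst) * (q.1).snd := by
        linear_combination e2p' - e2p + e2q - e2q' + ((l'.1).snd - (l.1).snd) * hx1
      exact mul_left_cancel₀ hc h
    have hp1 : p.1 = q.1 := TrivSqZeroExt.ext hx1 hx2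
    have hp2 : p.2 = q.2 := by
      rw [hmem p hp l hl, hmem q hq l hl, hp1]
    exact Prod.ext hp1 hp2
  -- all b₁ equal
  have hb : ∀ l ∈ L, (l.2).fst = (l₁.2).fst := by
    intro l hl
    have e1 := key1 p₀ hp₀ l hl
    have e2 := key1 p₀ hp₀ l₁ hl₁
    have := ha l hl l₁ hl₁
    rw [this] at e1
    linarith
  -- a₂ of l₁, l₂ differ
  have ha2 : (l₁.1).snd ≠ (l₂.1).snd := by
    intro h
    apply hne
    have e1 := key2 p₀ hp₀ l₁ hl₁
    have e2 := key2 p₀ hp₀ l₂ hl₂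
    have hA := ha l₁ hl₁ l₂ hl₂
    have hb2 : (l₁.2).snd = (l₂.2).snd := by
      rw [hA, h] at e1
      linarith
    have hbb := hb l₂ hl₂
    exact Prod.ext (TrivSqZeroExt.ext hA h) (TrivSqZeroExt.ext hbb.symm hb2)
  set d : ℝ := (l₁.1).snd - (l₂.1).snd with hd
  have hd0 : d ≠ 0 := sub_ne_zero.mpr ha2
  set r₁ : ℝ := ((l₂.2).snd - (l₁.2).snd) / d with hr₁
  set r₂ : ℝ := (l₁.1).fst * r₁ + (l₁.2).fst with hr₂
  have hR1 : ∀ p ∈ S, (p.1).fst = r₁ := by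
    intro p hp
    have e1 := key2 p hp l₁ hl₁
    have e2 := key2 p hp l₂ hl₂
    have hA := ha l₂ hl₂ l₁ hl₁
    rw [hA] at e2
    have h : d * (p.1).fst = (l₂.2).snd - (l₁.2).snd := by
      rw [hd]; linarith
    rw [hr₁]
    field_simp
    linarith [h]
  have hR2 : ∀ p ∈ S, (p.2).fst = r₂ := by
    intro p hp
    have e1 := key1 p hp l₁ hl₁
    rw [hR1 p hp] at e1
    exact e1
  refine ⟨⟨(l₁.1).fst, (l₁.2).fst, fun l hl => ⟨ha l hl l₁ hl₁, hb l hl⟩⟩,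
    r₁, r₂, fun p hp => ⟨hR1 p hp, hR2 p hp⟩, ?_⟩
  set K : ℝ := (p₀.2).snd - (l₁.1).fst * (p₀.1).snd with hK
  have hKall : ∀ l ∈ L, (l.1).snd * r₁ + (l.2).snd = K := by
    intro l hl
    have e := key2 p₀ hp₀ l hl
    rw [ha l hl l₁ hl₁, hR1 p₀ hp₀] at e
    rw [hK]; linarith
  by_cases hr0 : r₁ = 0
  · left
    refine ⟨K, fun l hl => ?_⟩
    have := hKall l hl
    rw [hr0] at this
    show (l.2).snd = K
    linarith
  · right
    refine ⟨K / r₁, fun l hl => ?_⟩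
    have := hKall l hl
    show (l.2).snd = r₁ * (K / r₁ - (l.1).snd)
    field_simp
    linarith
end

section
/- Let ℒ₁ and ℒ₂ be two distinct line families in 𝔻² that have the same real line ℓ, where ℓ is not parallel to the y-axis. If ℒ₁ and ℒ₂ have different special points, then at most one line of 𝔻² belongs to both ℒ₁ and ℒ₂. -/
/-- A line family in `𝔻²`: a set of at least two lines of the form `y = ax + b`
(recorded by their coefficient pairs `(a, b)`) with an infinite common intersection. -/
def IsLineFamily (L : Set (DualNumber ℝ × DualNumber ℝ)) : Prop :=
  (∃ l₁ ∈ L, ∃ l₂ ∈ L, l₁ ≠ l₂) ∧ (⋂ l ∈ L, dualLine l.1 l.2).Infinite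

/-- The family `L` has real line `y = a₁ x + b₁` (a non-vertical line in `ℝ²`):
every line of the family has `Re(a) = a₁` and `Re(b) = b₁`. -/
def HasRealLine (L : Set (DualNumber ℝ × DualNumber ℝ)) (a₁ b₁ : ℝ) : Prop :=
  ∀ l ∈ L, DRe l.1 = a₁ ∧ DRe l.2 = b₁

/-- The family `L` has special point `(r₁, r₂) ∈ ℝ²`: every point `(x, y)` of the common
intersection of the family satisfies `Re(x) = r₁` and `Re(y) = r₂`. -/
def HasSpecialPoint (L : Set (DualNumber ℝ × DualNumber ℝ)) (r₁ r₂ : ℝ) : Prop :=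
  ∀ p ∈ ⋂ l ∈ L, dualLine l.1 l.2, DRe p.1 = r₁ ∧ DRe p.2 = r₂

/-- **Lemma 2.2(b).** Two distinct line families in `𝔻²` with the same real line
(such a real line is never parallel to the `y`-axis) and different special points
have at most one line in common. -/
theorem dual_families_different_special_points (L₁ L₂ : Set (DualNumber ℝ × DualNumber ℝ))
    (h₁ : IsLineFamily L₁) (h₂ : IsLineFamily L₂) (hne : L₁ ≠ L₂)
    (a₁ b₁ : ℝ) (hr₁ : HasRealLine L₁ a₁ b₁) (hr₂ : HasRealLine L₂ a₁ b₁)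
    (r₁ r₂ r₁' r₂' : ℝ) (hs₁ : HasSpecialPoint L₁ r₁ r₂) (hs₂ : HasSpecialPoint L₂ r₁' r₂')
    (hsp : (r₁, r₂) ≠ (r₁', r₂')) :
    (L₁ ∩ L₂).Subsingleton := by
  intro l hl l' hl'
  by_contra hll'
  -- pick a point in each family's common intersection
  obtain ⟨p, hp⟩ := h₁.2.nonempty
  obtain ⟨q, hq⟩ := h₂.2.nonempty
  have hpl : p.2 = l.1 * p.1 + l.2 := Set.mem_iInter₂.mp hp l hl.1
  have hpl' : p.2 = l'.1 * p.1 + l'.2 := Set.mem_iInter₂.mp hp l' hl'.1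
  have hql : q.2 = l.1 * q.1 + l.2 := Set.mem_iInter₂.mp hq l hl.2
  have hql' : q.2 = l'.1 * q.1 + l'.2 := Set.mem_iInter₂.mp hq l' hl'.2
  obtain ⟨ha, hb⟩ := hr₁ l hl.1
  obtain ⟨ha', hb'⟩ := hr₁ l' hl'.1
  simp only [DRe] at ha hb ha' hb'
  -- snd components of the line equations
  have key : ∀ x y : DualNumber ℝ × DualNumber ℝ,
      y.2 = x.1 * y.1 + x.2 →
      y.2.snd = x.1.fst * y.1.snd + y.1.fst * x.1.snd + x.2.snd := by
    intro x y h
    rw [h]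
    simp [TrivSqZeroExt.snd_mul, smul_eq_mul, mul_comm]
  have kp := key l p hpl
  have kp' := key l' p hpl'
  have kq := key l q hql
  have kq' := key l' q hql'
  rw [ha] at kp kq; rw [ha'] at kp' kq'
  have ep : p.1.fst * (l.1.snd - l'.1.snd) = l'.2.snd - l.2.snd := by
    rw [kp] at kp'; linarith [kp']
  have eq' : q.1.fst * (l.1.snd - l'.1.snd) = l'.2.snd - l.2.snd := by
    rw [kq] at kq'; linarith [kq']
  by_cases hA : l.1.snd = l'.1.snd
  · -- then the two lines are equal, contradiction
    have hB : l.2.snd = l'.2.snd := by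
      rw [hA, sub_self, mul_zero] at ep; linarith
    apply hll'
    have e1 : l.1 = l'.1 := TrivSqZeroExt.ext (ha.trans ha'.symm) hA
    have e2 : l.2 = l'.2 := TrivSqZeroExt.ext (hb.trans hb'.symm) hB
    exact Prod.ext e1 e2
  · -- real parts of p.1 and q.1 agree, hence special points coincide
    have hx : p.1.fst = q.1.fst := by
      have h0 : l.1.snd - l'.1.snd ≠ 0 := sub_ne_zero.mpr hA
      have := ep.trans eq'.symm
      exact mul_right_cancel₀ h0 this
    obtain ⟨hp1, hp2⟩ := hs₁ p hp
    obtain ⟨hq1, hq2⟩ := hs₂ q hq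
    simp only [DRe] at hp1 hp2 hq1 hq2
    have hy : p.2.fst = q.2.fst := by
      have fp : p.2.fst = a₁ * p.1.fst + b₁ := by rw [hpl]; simp [ha, hb]
      have fq : q.2.fst = a₁ * q.1.fst + b₁ := by rw [hql]; simp [ha, hb]
      rw [fp, fq, hx]
    exact hsp (by rw [← hp1, ← hp2, ← hq1, ← hq2, hx, hy])
end

section
/- Let ℓ and ℓ' be distinct lines in 𝕊² defined respectively by y = ax + b and y = a'x + b', where a = a₁ + ja₂, b = b₁ + jb₂, a' = a'₁ + ja'₂, b' = b'₁ + jb'₂. Then ℓ ∩ ℓ' contains more than one point if and only if there exists a sign σ ∈ {+1, −1} such that a₁ − a'₁ = σ(a₂ − a'₂) ≠ 0 and b₁ − b'₁ = σ(b₂ − b'₂). Moreover, when these conditions are satisfied with sign σ, the intersection ℓ ∩ ℓ' is infinite, and every point (x,y) ∈ ℓ ∩ ℓ' with x = x₁ + jx₂ satisfies x₁ + σx₂ = (b'₁ − b₁)/(a₁ − a'₁). -/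
/-- The double (split-complex) numbers `ℝ[j]` with `j² = 1`: the number `a = a₁ + j a₂`
is recorded by its coordinates `re = a₁` and `im = a₂`. -/
@[ext] structure DoubleNumber where
  re : ℝ
  im : ℝ

namespace DoubleNumber

/-- Addition of double numbers: componentwise. -/
instance : Add DoubleNumber := ⟨fun a b => ⟨a.re + b.re, a.im + b.im⟩⟩

/-- Multiplication of double numbers, determined by `j² = 1`:
`(a₁ + j a₂)(b₁ + j b₂) = (a₁b₁ + a₂b₂) + j (a₁b₂ + a₂b₁)`. -/
instance : Mul DoubleNumber := ⟨fun a b => ⟨a.re * b.re + a.im * b.im, a.re * b.im + a.im * b.re⟩⟩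

end DoubleNumber

/-- The line in the double plane `𝕊²` defined by the equation `y = a x + b`. -/
def sLine (a b : DoubleNumber) : Set (DoubleNumber × DoubleNumber) :=
  {p | p.2 = a * p.1 + b}

lemma mem_sLine_iff (a b : DoubleNumber) (p : DoubleNumber × DoubleNumber) :
    p ∈ sLine a b ↔ p.2.re = a.re * p.1.re + a.im * p.1.im + b.re ∧
      p.2.im = a.re * p.1.im + a.im * p.1.re + b.im := by
  rw [sLine, Set.mem_setOf_eq, DoubleNumber.ext_iff]
  rfl

/-- **Lemma 3.1(a).** Let `ℓ, ℓ'` be distinct lines in `𝕊²` defined by `y = ax + b` and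
`y = a'x + b'`. Then `ℓ ∩ ℓ'` contains more than one point iff for some sign `σ ∈ {+1, -1}`
we have `a₁ - a'₁ = σ(a₂ - a'₂) ≠ 0` and `b₁ - b'₁ = σ(b₂ - b'₂)`; and when these conditions
hold with sign `σ`, the intersection is infinite and every `(x, y) ∈ ℓ ∩ ℓ'` satisfies
`x₁ + σ x₂ = (b'₁ - b₁)/(a₁ - a'₁)`. -/
theorem double_line_intersection (a b a' b' : DoubleNumber)
    (hne : sLine a b ≠ sLine a' b') :
    ((sLine a b ∩ sLine a' b').Nontrivial ↔
      ∃ σ : ℝ, (σ = 1 ∨ σ = -1) ∧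
        a.re - a'.re = σ * (a.im - a'.im) ∧ a.re - a'.re ≠ 0 ∧
        b.re - b'.re = σ * (b.im - b'.im)) ∧
    (∀ σ : ℝ, (σ = 1 ∨ σ = -1) →
      a.re - a'.re = σ * (a.im - a'.im) → a.re - a'.re ≠ 0 →
      b.re - b'.re = σ * (b.im - b'.im) →
      (sLine a b ∩ sLine a' b').Infinite ∧
      ∀ p ∈ sLine a b ∩ sLine a' b',
        p.1.re + σ * p.1.im = (b'.re - b.re) / (a.re - a'.re)) := by
  have hab : ¬(a = a' ∧ b = b') := by
    rintro ⟨rfl, rfl⟩; exact hne rfl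
  have part2 : ∀ σ : ℝ, (σ = 1 ∨ σ = -1) →
      a.re - a'.re = σ * (a.im - a'.im) → a.re - a'.re ≠ 0 →
      b.re - b'.re = σ * (b.im - b'.im) →
      (sLine a b ∩ sLine a' b').Infinite ∧
      ∀ p ∈ sLine a b ∩ sLine a' b',
        p.1.re + σ * p.1.im = (b'.re - b.re) / (a.re - a'.re) := by
    intro σ hσ h1 h2 h3
    have hσ2 : σ * σ = 1 := by rcases hσ with rfl | rfl <;> norm_num
    set c : ℝ := (b'.re - b.re) / (a.re - a'.re) with hc
    have hcm : c * (a.re - a'.re) = b'.re - b.re := div_mul_cancel₀ _ h2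
    have hβ : a.im - a'.im = σ * (a.re - a'.re) := by
      linear_combination -σ * h1 - (a.im - a'.im) * hσ2
    have hδ : b.im - b'.im = σ * (b.re - b'.re) := by
      linear_combination -σ * h3 - (b.im - b'.im) * hσ2
    constructor
    · apply Set.infinite_of_injective_forall_mem
        (f := fun t : ℝ => ((⟨t, σ * (c - t)⟩, a * ⟨t, σ * (c - t)⟩ + b) :
          DoubleNumber × DoubleNumber))
      · intro s t h
        exact congrArg (fun q => q.1.re) h
      · intro t
        refine ⟨rfl, ?_⟩
        rw [mem_sLine_iff]
        constructor
        · show a.re * t + a.im * (σ * (c - t)) + b.re =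
            a'.re * t + a'.im * (σ * (c - t)) + b'.re
          linear_combination (t - c) * h1 + hcm
        · show a.re * (σ * (c - t)) + a.im * t + b.im =
            a'.re * (σ * (c - t)) + a'.im * t + b'.im
          linear_combination σ * hcm + t * hβ + hδ
    · rintro p ⟨hp1, hp2⟩
      rw [mem_sLine_iff] at hp1 hp2
      rw [eq_div_iff h2]
      linear_combination hp2.1 - hp1.1 + σ * p.1.im * h1 +
        p.1.im * (a.im - a'.im) * hσ2
  refine ⟨⟨?_, ?_⟩, part2⟩
  · rintro ⟨p, hp, q, hq, hpq⟩
    obtain ⟨hp1, hp2⟩ := hp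
    obtain ⟨hq1, hq2⟩ := hq
    rw [mem_sLine_iff] at hp1 hp2 hq1 hq2
    have hx : p.1 ≠ q.1 := by
      intro h
      apply hpq
      have : p.2 = q.2 := by
        ext
        · rw [hp1.1, hq1.1, h]
        · rw [hp1.2, hq1.2, h]
      exact Prod.ext h this
    set α := a.re - a'.re with hα
    set β := a.im - a'.im with hβd
    set d := p.1.re - q.1.re with hd
    set e := p.1.im - q.1.im with he
    have hde : d ≠ 0 ∨ e ≠ 0 := by
      by_contra h
      push_neg at h
      apply hx
      ext
      · have := h.1; rw [hd] at this; linarith [sub_eq_zero.mp this]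
      · have := h.2; rw [he] at this; linarith [sub_eq_zero.mp this]
    have E1 : α * d + β * e = 0 := by
      linear_combination hp2.1 - hp1.1 + hq1.1 - hq2.1
    have E2 : β * d + α * e = 0 := by
      linear_combination hp2.2 - hp1.2 + hq1.2 - hq2.2
    have hsq : α * α = β * β := by
      rcases hde with h | h
      · have : (α * α - β * β) * d = 0 := by linear_combination α * E1 - β * E2
        rcases mul_eq_zero.mp this with h' | h'
        · linarith
        · exact absurd h' h
      · have : (α * α - β * β) * e = 0 := by linear_combination α * E2 - β * E1
        rcases mul_eq_zero.mp this with h' | h'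
        · linarith
        · exact absurd h' h
    -- Derive γ and δ relations from p's membership
    have G1 : α * p.1.re + β * p.1.im = b'.re - b.re := by
      linear_combination hp2.1 - hp1.1
    have G2 : β * p.1.re + α * p.1.im = b'.im - b.im := by
      linear_combination hp2.2 - hp1.2
    have hα0 : α ≠ 0 := by
      intro h0
      have hβ0 : β = 0 := by nlinarith [hsq]
      apply hab
      constructor
      · ext
        · rw [hα] at h0; linarith [sub_eq_zero.mp h0]
        · rw [hβd] at hβ0; linarith [sub_eq_zero.mp hβ0]
      · ext
        · rw [h0, hβ0] at G1; simp at G1; linarith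
        · rw [h0, hβ0] at G2; simp at G2; linarith
    have hcases : α = β ∨ α = -β := by
      have : (α - β) * (α + β) = 0 := by linear_combination hsq
      rcases mul_eq_zero.mp this with h | h
      · left; linarith
      · right; linarith
    rcases hcases with h | h
    · refine ⟨1, Or.inl rfl, by rw [one_mul]; exact h, hα0, ?_⟩
      have : b'.re - b.re = b'.im - b.im := by
        linear_combination G2 - G1 + (p.1.re - p.1.im) * h
      show b.re - b'.re = 1 * (b.im - b'.im)
      linarith
    · refine ⟨-1, Or.inr rfl, by rw [neg_one_mul]; exact h, hα0, ?_⟩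
      have : b'.re - b.re = -(b'.im - b.im) := by
        linear_combination -G1 - G2 + (p.1.re + p.1.im) * h
      show b.re - b'.re = -1 * (b.im - b'.im)
      linarith
  · rintro ⟨σ, hσ, h1, h2, h3⟩
    exact ((part2 σ hσ h1 h2 h3).1).nontrivial
end

section
/- Let ℒ be a set of at least two lines in 𝕊², each of the form y = ax + b, whose common intersection ⋂ℒ is infinite. Then there exist a sign σ ∈ {+1, −1} and reals t₁, t₂ such that every line of ℒ (written y = (a₁+ja₂)x + (b₁+jb₂)) satisfies a₁ − σa₂ = t₁ and b₁ − σb₂ = t₂, and there exists s ∈ ℝ such that every point (x,y) in the common intersection satisfies x₁ + σx₂ = s. Moreover: if s = 0 then all lines of ℒ have the same coefficient b, and every point (x,y) in the common intersection satisfies y₁ + σy₂ = b₁ + σb₂; if s ≠ 0 then there exist m, m' ∈ ℝ such that every line of ℒ satisfies b₁ = s(m − a₁) and b₂ = s(m' − a₂), and every point (x,y) in the common intersection satisfies y₁ + σy₂ = s(m + σm'). -/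
/-!
For `σ = ±1` the map `a ↦ a₁ + σ a₂` is a ring homomorphism `𝕊 → ℝ`, and the two of them
together identify `𝕊` with `ℝ × ℝ`. A double line `y = a x + b` therefore splits into two real
lines, one in each branch, and a point lies on it iff each branch of the point lies on the
corresponding real line. Two distinct real lines share at most one point, so if the lines of `ℒ`
were pairwise distinct in both branches the intersection would have at most one point. Hence in
one branch, `-σ`, all lines of `ℒ` coincide (this gives `t₁, t₂`), and in the other, `σ`, two of
them differ and the intersection projects to a single point `(s, c)`. Evaluating at the real
abscissa `x = s` then gives the same value `w = a s + b` for every line: in branch `σ` it is `c`,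
in branch `-σ` the lines coincide. Both cases of the conclusion are read off from `w`.
-/

namespace DoubleNumber

@[simp] lemma re_add (a b : DoubleNumber) : (a + b).re = a.re + b.re := rfl

@[simp] lemma im_add (a b : DoubleNumber) : (a + b).im = a.im + b.im := rfl

@[simp] lemma re_mul (a b : DoubleNumber) : (a * b).re = a.re * b.re + a.im * b.im := rfl

@[simp] lemma im_mul (a b : DoubleNumber) : (a * b).im = a.re * b.im + a.im * b.re := rfl

def ofReal (r : ℝ) : DoubleNumber := ⟨r, 0⟩

@[simp] lemma re_ofReal (r : ℝ) : (ofReal r).re = r := rfl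

@[simp] lemma im_ofReal (r : ℝ) : (ofReal r).im = 0 := rfl

def branch (σ : ℝ) (a : DoubleNumber) : ℝ := a.re + σ * a.im

lemma branch_neg (σ : ℝ) (a : DoubleNumber) : branch (-σ) a = a.re - σ * a.im := by
  simp only [branch]; ring

lemma branch_add (σ : ℝ) (a b : DoubleNumber) : branch σ (a + b) = branch σ a + branch σ b := by
  simp only [branch, re_add, im_add]; ring

lemma branch_mul {σ : ℝ} (hσ : σ * σ = 1) (a b : DoubleNumber) :
    branch σ (a * b) = branch σ a * branch σ b := by
  simp only [branch, re_mul, im_mul]; linear_combination (-(a.im * b.im)) * hσ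

lemma branch_ofReal (σ r : ℝ) : branch σ (ofReal r) = r := by
  simp [branch]

lemma eq_of_branch_eq {σ : ℝ} (hσ : σ ≠ 0) {a b : DoubleNumber}
    (h : branch σ a = branch σ b) (h' : branch (-σ) a = branch (-σ) b) : a = b := by
  simp only [branch] at h h'
  ext
  · linarith
  · exact mul_left_cancel₀ hσ (by linarith)

/-- Applied to a line `(a, b)` it gives the coefficients of its branch-`σ` real line, applied to
a point `(x, y)` the branch-`σ` real point. -/
def branch₂ (σ : ℝ) : DoubleNumber × DoubleNumber → ℝ × ℝ := Prod.map (branch σ) (branch σ)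

lemma branch₂_eq_branch₂ {σ : ℝ} {p q : DoubleNumber × DoubleNumber} :
    branch₂ σ p = branch₂ σ q ↔ branch σ p.1 = branch σ q.1 ∧ branch σ p.2 = branch σ q.2 :=
  Prod.ext_iff

lemma eq_of_branch₂_eq {σ : ℝ} (hσ : σ ≠ 0) {p q : DoubleNumber × DoubleNumber}
    (h : branch₂ σ p = branch₂ σ q) (h' : branch₂ (-σ) p = branch₂ (-σ) q) : p = q := by
  rw [branch₂_eq_branch₂] at h h'
  exact Prod.ext (eq_of_branch_eq hσ h.1 h'.1) (eq_of_branch_eq hσ h.2 h'.2)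

end DoubleNumber

open DoubleNumber

lemma branch_snd_of_mem_sLine {σ : ℝ} (hσ : σ * σ = 1) {l p : DoubleNumber × DoubleNumber}
    (hp : p ∈ sLine l.1 l.2) : branch σ p.2 = branch σ l.1 * branch σ p.1 + branch σ l.2 := by
  rw [hp, branch_add, branch_mul hσ]

lemma eq_of_mem_two_lines {K : Type*} [Field K] {ℓ ℓ' : K × K} (hne : ℓ ≠ ℓ') {x y x' y' : K}
    (h : y = ℓ.1 * x + ℓ.2) (h' : y = ℓ'.1 * x + ℓ'.2)
    (hq : y' = ℓ.1 * x' + ℓ.2) (hq' : y' = ℓ'.1 * x' + ℓ'.2) : (x, y) = (x', y') := by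
  by_cases hslope : ℓ.1 = ℓ'.1
  · refine absurd (Prod.ext hslope ?_) hne
    linear_combination h' - h - x * hslope
  · have hx : x = x' := by
      refine mul_left_cancel₀ (sub_ne_zero.mpr hslope) ?_
      linear_combination h' - h - hq' + hq
    rw [hx, h, hq, hx]

section LineFamily

variable {L : Set (DoubleNumber × DoubleNumber)} {σ : ℝ}

lemma branch₂_eq_of_mem_iInter_sLine (hσ : σ * σ = 1) {l l' : DoubleNumber × DoubleNumber}
    (hl : l ∈ L) (hl' : l' ∈ L) (hne : branch₂ σ l ≠ branch₂ σ l')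
    {p q : DoubleNumber × DoubleNumber}
    (hp : p ∈ ⋂ l ∈ L, sLine l.1 l.2) (hq : q ∈ ⋂ l ∈ L, sLine l.1 l.2) :
    branch₂ σ p = branch₂ σ q := by
  rw [Set.mem_iInter₂] at hp hq
  exact eq_of_mem_two_lines hne (branch_snd_of_mem_sLine hσ (hp l hl))
    (branch_snd_of_mem_sLine hσ (hp l' hl')) (branch_snd_of_mem_sLine hσ (hq l hl))
    (branch_snd_of_mem_sLine hσ (hq l' hl'))

lemma exists_sign_forall_branch₂_eq (hI : (⋂ l ∈ L, sLine l.1 l.2).Nontrivial) :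
    ∃ σ : ℝ, (σ = 1 ∨ σ = -1) ∧ ∀ l ∈ L, ∀ l' ∈ L, branch₂ (-σ) l = branch₂ (-σ) l' := by
  by_contra! h
  obtain ⟨k, hk, k', hk', hne⟩ := h 1 (.inl rfl)
  obtain ⟨n, hn, n', hn', hne'⟩ := h (-1) (.inr rfl)
  rw [neg_neg] at hne'
  obtain ⟨p, hp, q, hq, hpq⟩ := hI
  exact hpq (eq_of_branch₂_eq one_ne_zero
    (branch₂_eq_of_mem_iInter_sLine (by norm_num) hn hn' hne' hp hq)
    (branch₂_eq_of_mem_iInter_sLine (by norm_num) hk hk' hne hp hq))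

lemma mul_ofReal_add_eq_of_mem_iInter_sLine (hσ : σ * σ = 1)
    (hconst : ∀ l ∈ L, ∀ l' ∈ L, branch₂ (-σ) l = branch₂ (-σ) l')
    {p : DoubleNumber × DoubleNumber} (hp : p ∈ ⋂ l ∈ L, sLine l.1 l.2)
    {l l' : DoubleNumber × DoubleNumber} (hl : l ∈ L) (hl' : l' ∈ L) :
    l.1 * ofReal (branch σ p.1) + l.2 = l'.1 * ofReal (branch σ p.1) + l'.2 := by
  rw [Set.mem_iInter₂] at hp
  have hσ' : -σ * -σ = 1 := by rwa [neg_mul_neg]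
  have hc := branch₂_eq_branch₂.mp (hconst l hl l' hl')
  refine eq_of_branch_eq (left_ne_zero_of_mul_eq_one hσ) ?_ ?_
  · simp only [branch_add, branch_mul hσ, branch_ofReal]
    rw [← branch_snd_of_mem_sLine hσ (hp l hl), ← branch_snd_of_mem_sLine hσ (hp l' hl')]
  · simp only [branch_add, branch_mul hσ', branch_ofReal, hc]

end LineFamily

/-- **Lemma 3.1(b).** Let `ℒ` be a set of at least two lines of the form `y = ax + b`
(recorded by their coefficient pairs `(a, b)`) whose common intersection is infinite.
Then there are a sign `σ ∈ {+1, -1}` and `t₁, t₂ ∈ ℝ` such that every line satisfies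
`a₁ - σ a₂ = t₁` and `b₁ - σ b₂ = t₂`, and there is `s ∈ ℝ` such that every point `(x, y)`
of the common intersection satisfies `x₁ + σ x₂ = s`. Moreover: if `s = 0` then all lines
have the same coefficient `b` and every intersection point satisfies `y₁ + σ y₂ = b₁ + σ b₂`;
if `s ≠ 0` then there are `m, m' ∈ ℝ` such that every line satisfies `b₁ = s(m - a₁)` and
`b₂ = s(m' - a₂)`, and every intersection point satisfies `y₁ + σ y₂ = s(m + σ m')`. -/
theorem double_line_family_structure (L : Set (DoubleNumber × DoubleNumber))
    (htwo : ∃ l₁ ∈ L, ∃ l₂ ∈ L, l₁ ≠ l₂)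
    (hinf : (⋂ l ∈ L, sLine l.1 l.2).Infinite) :
    ∃ σ : ℝ, (σ = 1 ∨ σ = -1) ∧
    ∃ t₁ t₂ : ℝ,
      (∀ l ∈ L, l.1.re - σ * l.1.im = t₁ ∧ l.2.re - σ * l.2.im = t₂) ∧
      ∃ s : ℝ,
        (∀ p ∈ ⋂ l ∈ L, sLine l.1 l.2, p.1.re + σ * p.1.im = s) ∧
        (s = 0 →
          ∃ b : DoubleNumber, (∀ l ∈ L, l.2 = b) ∧
            ∀ p ∈ ⋂ l ∈ L, sLine l.1 l.2,
              p.2.re + σ * p.2.im = b.re + σ * b.im) ∧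
        (s ≠ 0 →
          ∃ m m' : ℝ,
            (∀ l ∈ L, l.2.re = s * (m - l.1.re) ∧ l.2.im = s * (m' - l.1.im)) ∧
            ∀ p ∈ ⋂ l ∈ L, sLine l.1 l.2,
              p.2.re + σ * p.2.im = s * (m + σ * m')) := by
  obtain ⟨σ, hσ, hconst⟩ := exists_sign_forall_branch₂_eq hinf.nontrivial
  have hσσ : σ * σ = 1 := by rcases hσ with rfl | rfl <;> norm_num
  obtain ⟨l₁, hl₁, l₂, hl₂, hne⟩ := htwo
  have hdiff : branch₂ σ l₁ ≠ branch₂ σ l₂ := fun h =>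
    hne (eq_of_branch₂_eq (left_ne_zero_of_mul_eq_one hσσ) h (hconst l₁ hl₁ l₂ hl₂))
  obtain ⟨p₀, hp₀⟩ := hinf.nonempty
  have hpt : ∀ p ∈ ⋂ l ∈ L, sLine l.1 l.2, branch₂ σ p = branch₂ σ p₀ := fun p hp =>
    branch₂_eq_of_mem_iInter_sLine hσσ hl₁ hl₂ hdiff hp hp₀
  set s := branch σ p₀.1
  set w := l₁.1 * ofReal s + l₁.2
  have hw : ∀ l ∈ L, l.1 * ofReal s + l.2 = w := fun l hl =>
    mul_ofReal_add_eq_of_mem_iInter_sLine hσσ hconst hp₀ hl hl₁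
  have hy : ∀ p ∈ ⋂ l ∈ L, sLine l.1 l.2, branch σ p.2 = branch σ w := fun p hp => by
    rw [(branch₂_eq_branch₂.mp (hpt p hp)).2, branch_add, branch_mul hσσ, branch_ofReal]
    exact branch_snd_of_mem_sLine hσσ (Set.mem_iInter₂.mp hp₀ l₁ hl₁)
  refine ⟨σ, hσ, l₁.1.re - σ * l₁.1.im, l₁.2.re - σ * l₁.2.im, fun l hl => ?_, s,
    fun p hp => congrArg Prod.fst (hpt p hp), fun hs => ⟨w, fun l hl => ?_, hy⟩,
    fun hs => ⟨w.re / s, w.im / s, fun l hl => ?_, fun p hp => ?_⟩⟩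
  · simpa only [branch₂_eq_branch₂, branch_neg] using hconst l hl l₁ hl₁
  · simpa [DoubleNumber.ext_iff, hs] using hw l hl
  · have hwl := hw l hl
    simp only [DoubleNumber.ext_iff, re_add, im_add, re_mul, im_mul, re_ofReal, im_ofReal] at hwl
    constructor <;> rw [mul_sub, mul_div_cancel₀ _ hs] <;> linarith
  · rw [← branch, hy p hp, branch]
    field_simp
end

section
/- Let ℒ₁ and ℒ₂ be distinct line families in 𝕊² with the same sign σ. If ℒ₁ and ℒ₂ have the same line parameter but different values of s (the first coordinate of their point parameters), then at most one line of 𝕊² belongs to both ℒ₁ and ℒ₂. -/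
/-- `L` is a line family in `𝕊²` (a set of at least two lines of the form `y = ax + b`,
recorded by their coefficient pairs `(a, b)`, with an infinite common intersection) with
sign `σ ∈ {+1, -1}`, point parameter `(s, s')` and line parameter `(t, t')`: every point
`(x, y)` of the common intersection satisfies `x₁ + σ x₂ = s` and `y₁ + σ y₂ = s'`, and
every line `y = (a₁ + j a₂) x + (b₁ + j b₂)` of the family satisfies `a₁ - σ a₂ = t` and
`b₁ - σ b₂ = t'`. -/
def IsLineFamilyWith (L : Set (DoubleNumber × DoubleNumber)) (σ s s' t t' : ℝ) : Prop :=
  (∃ l₁ ∈ L, ∃ l₂ ∈ L, l₁ ≠ l₂) ∧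
  (⋂ l ∈ L, sLine l.1 l.2).Infinite ∧
  (σ = 1 ∨ σ = -1) ∧
  (∀ p ∈ ⋂ l ∈ L, sLine l.1 l.2, p.1.re + σ * p.1.im = s ∧ p.2.re + σ * p.2.im = s') ∧
  (∀ l ∈ L, l.1.re - σ * l.1.im = t ∧ l.2.re - σ * l.2.im = t')

/-- **Lemma 3.2(c).** Two distinct line families in `𝕊²` with the same sign and the same
line parameter but different values of `s` (the first coordinate of their point parameters)
have at most one line in common. -/
theorem double_families_same_line_parameter_different_s
    (L₁ L₂ : Set (DoubleNumber × DoubleNumber)) (σ s₁ s₁' s₂ s₂' t t' : ℝ)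
    (h₁ : IsLineFamilyWith L₁ σ s₁ s₁' t t') (h₂ : IsLineFamilyWith L₂ σ s₂ s₂' t t')
    (hne : L₁ ≠ L₂) (hs : s₁ ≠ s₂) :
    (L₁ ∩ L₂).Subsingleton := by
  obtain ⟨-, hinf₁, hσ, hpt₁, hln₁⟩ := h₁
  obtain ⟨-, hinf₂, -, hpt₂, -⟩ := h₂
  have hσ2 : σ * σ = 1 := by rcases hσ with h | h <;> simp [h]
  obtain ⟨p, hp⟩ := hinf₁.nonempty
  obtain ⟨q, hq⟩ := hinf₂.nonempty
  have key : ∀ l ∈ L₁ ∩ L₂,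
      (l.1.re + σ * l.1.im) * s₁ + (l.2.re + σ * l.2.im) = s₁' ∧
      (l.1.re + σ * l.1.im) * s₂ + (l.2.re + σ * l.2.im) = s₂' := by
    intro l hl
    have hpl : p.2 = l.1 * p.1 + l.2 := Set.mem_iInter₂.mp hp l hl.1
    have hql : q.2 = l.1 * q.1 + l.2 := Set.mem_iInter₂.mp hq l hl.2
    obtain ⟨hx, hy⟩ := hpt₁ p hp
    obtain ⟨hx', hy'⟩ := hpt₂ q hq
    have e1 : p.2.re = l.1.re * p.1.re + l.1.im * p.1.im + l.2.re := by rw [hpl]; rfl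
    have e2 : p.2.im = l.1.re * p.1.im + l.1.im * p.1.re + l.2.im := by rw [hpl]; rfl
    have e3 : q.2.re = l.1.re * q.1.re + l.1.im * q.1.im + l.2.re := by rw [hql]; rfl
    have e4 : q.2.im = l.1.re * q.1.im + l.1.im * q.1.re + l.2.im := by rw [hql]; rfl
    constructor
    · linear_combination hy - e1 - σ * e2 - (l.1.re + σ * l.1.im) * hx +
        l.1.im * p.1.im * hσ2
    · linear_combination hy' - e3 - σ * e4 - (l.1.re + σ * l.1.im) * hx' +
        l.1.im * q.1.im * hσ2
  intro l hl m hm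
  obtain ⟨k1, k2⟩ := key l hl
  obtain ⟨k3, k4⟩ := key m hm
  obtain ⟨t1, t2⟩ := hln₁ l hl.1
  obtain ⟨t3, t4⟩ := hln₁ m hm.1
  have hF : l.1.re + σ * l.1.im = m.1.re + σ * m.1.im := by
    have hd : (l.1.re + σ * l.1.im - (m.1.re + σ * m.1.im)) * (s₁ - s₂) = 0 := by
      linear_combination k1 - k2 - k3 + k4
    rcases mul_eq_zero.mp hd with h | h
    · linarith
    · exact absurd (by linarith : s₁ = s₂) hs
  have hG : l.2.re + σ * l.2.im = m.2.re + σ * m.2.im := by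
    linear_combination k1 - k3 - s₁ * hF
  have h1re : l.1.re = m.1.re := by linarith
  have h2re : l.2.re = m.2.re := by linarith
  have h1im : l.1.im = m.1.im := by
    rcases hσ with h | h <;> subst h <;> linarith
  have h2im : l.2.im = m.2.im := by
    rcases hσ with h | h <;> subst h <;> linarith
  have : l.1 = m.1 := DoubleNumber.ext h1re h1im
  have : l.2 = m.2 := DoubleNumber.ext h2re h2im
  exact Prod.ext ‹l.1 = m.1› ‹l.2 = m.2›
end

section
/- Let ℒ₁ and ℒ₂ be distinct line families in 𝕊² with opposite signs (one positive and one negative). Then at most one line of 𝕊² belongs to both ℒ₁ and ℒ₂. -/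
/-- **Lemma 3.4.** Two distinct line families in `𝕊²` with opposite signs (one positive,
one negative) have at most one line in common. -/
theorem double_families_opposite_signs
    (L₁ L₂ : Set (DoubleNumber × DoubleNumber)) (s₁ s₁' t₁ t₁' s₂ s₂' t₂ t₂' : ℝ)
    (h₁ : IsLineFamilyWith L₁ 1 s₁ s₁' t₁ t₁') (h₂ : IsLineFamilyWith L₂ (-1) s₂ s₂' t₂ t₂')
    (hne : L₁ ≠ L₂) :
    (L₁ ∩ L₂).Subsingleton := by
  intro l hl l' hl'
  have A := h₁.2.2.2.2 l hl.1
  have B := h₂.2.2.2.2 l hl.2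
  have A' := h₁.2.2.2.2 l' hl'.1
  have B' := h₂.2.2.2.2 l' hl'.2
  simp only [one_mul, neg_one_mul, sub_neg_eq_add] at A B A' B'
  have e1 : l.1 = l'.1 := by ext <;> linarith [A.1, B.1, A'.1, B'.1]
  have e2 : l.2 = l'.2 := by ext <;> linarith [A.2, B.2, A'.2, B'.2]
  exact Prod.ext e1 e2
end
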